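/- arXiv:2006.09768 — 2 statements merged into one kernel-verified Lean document; each statement's English description precedes it below -/
import Mathlib

section
/- Let h : Ω × ℝⁿ → ℝ be measurable with respect to F ⊗ B(ℝⁿ) on a complete probability space (Ω, F, P), and let A ∈ F ⊗ B(ℝⁿ). Then the function g(ω) := sup { h(ω,x) : x ∈ ℝⁿ, (ω,x) ∈ A } is F-measurable. -/
/-!
The set `{g > K}` is the projection onto `Ω` of the product-measurable set `A ∩ {K < h}`.
Every product-measurable set lies in the σ-algebra generated by countably many rectangles,
hence is the preimage of a Borel set `B ⊆ (ℕ → Bool) × ℝⁿ` under `φ × id` for a measurable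
coding `φ : Ω → ℕ → Bool`, and its projection is the `φ`-preimage of the analytic set
`Prod.fst '' B`. Analytic sets are null-measurable for every finite outer-regular measure
(Choquet capacitability): writing the set as `range f` with `f : (ℕ → ℕ) → X` continuous and
bounding one coordinate at a time without losing more than a prescribed amount of measure,
one obtains compact subsets `f '' {v | ∀ i, v i ≤ m i}` of almost full measure. Completeness
of `P` turns null-measurability into measurability.
-/

open MeasureTheory Set Filter Topology
open scoped ENNReal

namespace MeasureTheory

lemma isCompact_setOf_forall_le (m : ℕ → ℕ) : IsCompact {v : ℕ → ℕ | ∀ i, v i ≤ m i} := by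
  simpa only [Set.pi, mem_univ, true_implies, mem_Iic] using
    isCompact_univ_pi fun i => (finite_Iic (m i)).isCompact

variable {X : Type*} {f : (ℕ → ℕ) → X}

section Measure

variable [MeasurableSpace X] {μ : Measure X}

lemma exists_lt_measure_image_inter_le {t : Set (ℕ → ℕ)} (k : ℕ) {r : ℝ≥0∞}
    (hr : r < μ (f '' t)) : ∃ m, r < μ (f '' (t ∩ {v : ℕ → ℕ | v k ≤ m})) := by
  have hunion : f '' t = ⋃ m : ℕ, f '' (t ∩ {v | v k ≤ m}) := by
    rw [← image_iUnion, ← inter_iUnion,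
      iUnion_eq_univ_iff.2 fun v => ⟨v k, le_refl (v k)⟩, inter_univ]
  have hmono : Monotone fun m : ℕ => f '' (t ∩ {v | v k ≤ m}) := fun a b hab =>
    image_mono (inter_subset_inter_right _ fun v hv => le_trans hv hab)
  rwa [hunion, hmono.measure_iUnion, lt_iSup_iff] at hr

lemma exists_forall_lt_measure_image_setOf_le {r : ℝ≥0∞} (hr : r < μ (range f)) :
    ∃ m : ℕ → ℕ, ∀ k, r < μ (f '' {v | ∀ i < k, v i ≤ m i}) := by
  have step : ∀ (t : Set (ℕ → ℕ)) (k : ℕ),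
      ∃ m, r < μ (f '' t) → r < μ (f '' (t ∩ {v | v k ≤ m})) := by
    intro t k
    by_cases ht : r < μ (f '' t)
    · exact (exists_lt_measure_image_inter_le k ht).imp fun _ h _ => h
    · exact ⟨0, fun h => absurd h ht⟩
  choose next hnext using step
  let T : ℕ → Set (ℕ → ℕ) := fun k => Nat.rec univ (fun k t => t ∩ {v | v k ≤ next t k}) k
  have hT : ∀ k, r < μ (f '' T k) := by
    intro k
    induction k with
    | zero => simpa [T] using hr
    | succ k ih => exact hnext (T k) k ih
  have hT_subset : ∀ k, T k ⊆ {v | ∀ i < k, v i ≤ next (T i) i} := by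
    intro k
    induction k with
    | zero => simp
    | succ k ih =>
      rintro v ⟨hv, hvk⟩ i hi
      rcases Nat.lt_succ_iff_lt_or_eq.1 hi with hi | rfl
      exacts [ih hv i hi, hvk]
  exact ⟨fun i => next (T i) i,
    fun k => (hT k).trans_le (measure_mono (image_mono (hT_subset k)))⟩

end Measure

lemma exists_image_setOf_le_subset [TopologicalSpace X] (hf : Continuous f) {U : Set X}
    (hU : IsOpen U) {m : ℕ → ℕ} (hmU : f '' {v | ∀ i, v i ≤ m i} ⊆ U) :
    ∃ k, f '' {v | ∀ i < k, v i ≤ m i} ⊆ U := by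
  by_contra! hcon
  choose y hy hyU using fun k => not_subset.1 (hcon k)
  choose w hw hwy using hy
  obtain ⟨x, hx, φ, hφ, hlim⟩ := (isCompact_setOf_forall_le m).tendsto_subseq
    (x := fun k i => min (w k i) (m i)) fun k i => min_le_right _ _
  -- Clipping at `m` does not move the coordinates below `φ j` of `w (φ j)`.
  have hw_lim : Tendsto (fun j => w (φ j)) atTop (𝓝 x) := by
    refine tendsto_pi_nhds.2 fun i => (tendsto_pi_nhds.1 hlim i).congr' ?_
    filter_upwards [eventually_gt_atTop i] with j hj
    exact min_eq_left (hw (φ j) i (hj.trans_le hφ.le_apply))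
  obtain ⟨j, hj⟩ := ((hf.tendsto x).comp hw_lim |>.eventually
    (hU.mem_nhds (hmU ⟨x, hx, rfl⟩))).exists
  exact hyU (φ j) (hwy (φ j) ▸ hj)

variable [TopologicalSpace X] [MeasurableSpace X] {μ : Measure X}

theorem AnalyticSet.exists_isCompact_lt [μ.OuterRegular] {s : Set X} (hs : AnalyticSet s)
    {r : ℝ≥0∞} (hr : r < μ s) : ∃ K ⊆ s, IsCompact K ∧ r < μ K := by
  rw [AnalyticSet] at hs
  obtain rfl | ⟨f, hf, rfl⟩ := hs
  · simp at hr
  obtain ⟨r', hrr', hr's⟩ := exists_between hr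
  obtain ⟨m, hm⟩ := exists_forall_lt_measure_image_setOf_le hr's
  refine ⟨_, image_subset_range _ _, (isCompact_setOf_forall_le m).image hf, ?_⟩
  by_contra! hK
  obtain ⟨U, hKU, hU, hμU⟩ := Set.exists_isOpen_lt_of_lt _ r' (hK.trans_lt hrr')
  obtain ⟨k, hk⟩ := exists_image_setOf_le_subset hf hU hKU
  exact (hm k).not_ge ((measure_mono hk).trans hμU.le)

theorem AnalyticSet.nullMeasurableSet [T2Space X] [OpensMeasurableSpace X] [IsFiniteMeasure μ]
    [μ.OuterRegular] {s : Set X} (hs : AnalyticSet s) : NullMeasurableSet s μ := by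
  rcases eq_zero_or_pos (μ s) with hs0 | hs0
  · exact NullMeasurableSet.of_null hs0
  obtain ⟨u, -, hu, hu_lim⟩ := exists_seq_strictMono_tendsto' hs0
  choose K hKs hK hμK using fun n => hs.exists_isCompact_lt (hu n).2
  have hμs : μ s ≤ μ (⋃ n, K n) :=
    le_of_tendsto' hu_lim fun n => (hμK n).le.trans (measure_mono (subset_iUnion K n))
  have hB : MeasurableSet (⋃ n, K n) := .iUnion fun n => (hK n).measurableSet
  exact hB.nullMeasurableSet.congr <| ae_eq_of_subset_of_measure_ge (iUnion_subset hKs) hμs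
    hB.nullMeasurableSet (measure_ne_top _ _)

end MeasureTheory

section Projection

variable {Ω Y : Type*} [MeasurableSpace Ω] [MeasurableSpace Y]

theorem MeasurableSet.exists_eq_preimage_prodMap {A : Set (Ω × Y)} (hA : MeasurableSet A) :
    ∃ φ : Ω → ℕ → Bool, Measurable φ ∧
      ∃ B : Set ((ℕ → Bool) × Y), MeasurableSet B ∧ A = Prod.map φ id ⁻¹' B := by
  classical
  rw [← generateFrom_prod] at hA
  induction A, hA using MeasurableSpace.generateFrom_induction with
  | hC _ hst =>
    obtain ⟨s, hs, t, ht, rfl⟩ := hst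
    refine ⟨fun ω _ => decide (ω ∈ s), measurable_pi_iff.2 fun _ => measurable_to_bool ?_,
      ((fun c : ℕ → Bool => c 0) ⁻¹' {true}) ×ˢ t,
      (measurable_pi_apply 0 (measurableSet_singleton true)).prod ht, ?_⟩
    · simpa [preimage] using hs
    · ext; simp
  | empty => exact ⟨fun _ _ => false, measurable_const, ∅, .empty, rfl⟩
  | compl _ _ ih =>
    obtain ⟨φ, hφ, B, hB, rfl⟩ := ih
    exact ⟨φ, hφ, Bᶜ, hB.compl, rfl⟩
  | iUnion A _ ih =>
    choose φ hφ B hB hAB using ih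
    -- Interleave the countably many codes `φ i` into one code via `Nat.pair`.
    let Φ : Ω → ℕ → Bool := fun ω m => φ (Nat.unpair m).1 ω (Nat.unpair m).2
    let proj : ℕ → (ℕ → Bool) → ℕ → Bool := fun i c j => c (Nat.pair i j)
    have hproj : ∀ i, Measurable (proj i) := fun i => measurable_pi_lambda _ fun j =>
      measurable_pi_apply _
    have hprojΦ : ∀ i, proj i ∘ Φ = φ i := fun i => by
      funext ω j
      simp [proj, Φ]
    refine ⟨Φ, measurable_pi_lambda _ fun m => (measurable_pi_apply _).comp (hφ _),
      ⋃ i, Prod.map (proj i) id ⁻¹' B i, .iUnion fun i => (hproj i).prodMap measurable_id (hB i),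
      ?_⟩
    simp only [preimage_iUnion, hAB, ← preimage_comp, Prod.map_comp_map, hprojΦ,
      Function.id_comp]

theorem MeasurableSet.nullMeasurableSet_image_fst [StandardBorelSpace Y] {A : Set (Ω × Y)}
    (hA : MeasurableSet A) (μ : Measure Ω) [IsFiniteMeasure μ] :
    NullMeasurableSet (Prod.fst '' A) μ := by
  obtain ⟨φ, hφ, B, hB, rfl⟩ := hA.exists_eq_preimage_prodMap
  have himage : Prod.fst '' (Prod.map φ id ⁻¹' B) = φ ⁻¹' (Prod.fst '' B) := by
    ext ω
    simp
  rw [himage]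
  exact ((hB.analyticSet_image measurable_fst).nullMeasurableSet).preimage
    (hφ.quasiMeasurePreserving μ)

end Projection

theorem Measurable.sSup_image_section {Ω Y α : Type*} [MeasurableSpace Ω] [MeasurableSpace Y]
    [StandardBorelSpace Y] [CompleteLinearOrder α] [TopologicalSpace α] [OrderTopology α]
    [SecondCountableTopology α] [MeasurableSpace α] [BorelSpace α] {f : Ω × Y → α}
    (hf : Measurable f) (μ : Measure Ω) [IsFiniteMeasure μ] [μ.IsComplete] {A : Set (Ω × Y)}
    (hA : MeasurableSet A) :
    Measurable fun ω => sSup ((fun y => f (ω, y)) '' {y | (ω, y) ∈ A}) := by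
  refine measurable_of_Ioi fun K => ?_
  have hsuperlevel : (fun ω => sSup ((fun y => f (ω, y)) '' {y | (ω, y) ∈ A})) ⁻¹' Ioi K =
      Prod.fst '' (A ∩ f ⁻¹' Ioi K) := by
    ext ω
    simp [lt_sSup_iff]
  rw [hsuperlevel]
  exact ((hA.inter (hf measurableSet_Ioi)).nullMeasurableSet_image_fst μ).measurable_of_complete

/-- Measurable supremum over sections of a product-measurable set,
via the measurable projection theorem on a complete probability space. -/
theorem stmt_0 {Ω : Type*} [MeasurableSpace Ω] (P : Measure Ω) [IsProbabilityMeasure P]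
    [P.IsComplete] (n : ℕ)
    (h : Ω × (Fin n → ℝ) → ℝ) (hh : Measurable h)
    (A : Set (Ω × (Fin n → ℝ))) (hA : MeasurableSet A) :
    Measurable fun ω => sSup ((fun x => (h (ω, x) : EReal)) '' {x | (ω, x) ∈ A}) :=
  (measurable_coe_real_ereal.comp hh).sSup_image_section P hA
end

section
/- Let (Xⁿ)_{n≥0} be a sequence of adapted càdlàg processes of class [D] converging increasingly and pointwise to a càdlàg process X of class [D], and let Z^{Xⁿ} and Z^X denote the respective Snell envelopes, i.e., Z^Y_θ = ess sup_{τ ∈ T_θ} E[Y_τ | F_θ] for stopping times θ. Then for every stopping time θ, Z^{Xⁿ}_θ converges increasingly to Z^X_θ almost surely. -/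
/-!
Fix a stopping time `θ`. Each Snell envelope at `θ` is the essential supremum, over stopping times
`τ ∈ [θ, T]`, of `E[Y_τ | F_θ]`. Right-continuity makes `X_τ` measurable and class [D] makes it
integrable, so by conditional monotone convergence `E[Xⁿ_τ | F_θ]` increases a.s. to
`E[X_τ | F_θ]` for each `τ`. Hence `Z^{Xⁿ}_θ` increases a.s. to a limit that lies below `Z^X_θ`
and dominates every `E[X_τ | F_θ]`; by minimality of the essential supremum it equals `Z^X_θ`.
-/

open MeasureTheory Filter Topology Set

lemma tendsto_ceil_mul_div_nhdsGE (r : ℝ) :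
    Tendsto (fun n : ℕ => (⌈r * (n + 1)⌉ : ℝ) / (n + 1)) atTop (𝓝[≥] r) := by
  have hpos (n : ℕ) : (0 : ℝ) < n + 1 := n.cast_add_one_pos
  have hge (n : ℕ) : r ≤ (⌈r * (n + 1)⌉ : ℝ) / (n + 1) := by
    rw [le_div_iff₀ (hpos n)]
    exact Int.le_ceil _
  have hle (n : ℕ) : (⌈r * (n + 1)⌉ : ℝ) / (n + 1) ≤ r + 1 / (n + 1) := by
    rw [div_le_iff₀ (hpos n), add_mul, one_div_mul_cancel (hpos n).ne']
    exact (Int.ceil_lt_add_one _).le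
  have hlim : Tendsto (fun n : ℕ => r + 1 / ((n : ℝ) + 1)) atTop (𝓝 r) := by
    simpa using tendsto_const_nhds.add (tendsto_one_div_add_atTop_nhds_zero_nat (𝕜 := ℝ))
  exact tendsto_nhdsWithin_iff.2
    ⟨tendsto_of_tendsto_of_tendsto_of_le_of_le tendsto_const_nhds hlim hge hle,
      Eventually.of_forall hge⟩

theorem measurable_comp_of_continuousWithinAt_Ici {Ω E : Type*} [MeasurableSpace Ω]
    [TopologicalSpace E] [TopologicalSpace.PseudoMetrizableSpace E] [MeasurableSpace E]
    [BorelSpace E]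
    {X : ℝ → Ω → E} (hX : ∀ t, Measurable (X t))
    (hc : ∀ ω t, ContinuousWithinAt (fun s => X s ω) (Ici t) t)
    {τ : Ω → ℝ} (hτ : Measurable τ) :
    Measurable fun ω => X (τ ω) ω := by
  -- `τ` is approximated from above by the countably-valued `⌈τ (n + 1)⌉ / (n + 1)`.
  have happrox (n : ℕ) : Measurable fun ω => X ((⌈τ ω * (n + 1)⌉ : ℝ) / (n + 1)) ω :=
    (measurable_from_prod_countable_left (f := fun p : Ω × ℤ => X ((p.2 : ℝ) / (n + 1)) p.1)
      fun k => hX (k / (n + 1))).comp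
      (measurable_id.prodMk (Int.measurable_ceil.comp (hτ.mul_const _)))
  exact measurable_of_tendsto_metrizable happrox <| tendsto_pi_nhds.2 fun ω =>
    (hc ω (τ ω)).tendsto.comp (tendsto_ceil_mul_div_nhdsGE (τ ω))

theorem MeasureTheory.UnifIntegrable.memLp_of_isFiniteMeasure {Ω ι E : Type*}
    {m0 : MeasurableSpace Ω} {μ : Measure Ω} [IsFiniteMeasure μ] [NormedAddCommGroup E]
    {p : ENNReal} {f : ι → Ω → E}
    (hf : UnifIntegrable f p μ) (hfm : ∀ i, StronglyMeasurable (f i)) (i : ι) :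
    MemLp (f i) p μ := by
  obtain ⟨δ, hδ, hsmall⟩ := hf one_pos
  set s : ℕ → Set Ω := fun c => {ω | c ≤ ‖f i ω‖}
  have hs (c : ℕ) : MeasurableSet (s c) :=
    measurableSet_le measurable_const (hfm i).norm.measurable
  have hs_lim : Tendsto (fun c => μ (s c)) atTop (𝓝 (μ ∅)) :=
    tendsto_measure_of_tendsto_indicator_of_isFiniteMeasure atTop μ hs fun ω =>
      (tendsto_natCast_atTop_atTop.eventually_gt_atTop ‖f i ω‖).mono fun c hc => by
        simpa [s] using hc
  rw [measure_empty] at hs_lim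
  obtain ⟨c, hc⟩ := (hs_lim.eventually_le_const (ENNReal.ofReal_pos.2 hδ)).exists
  have hlarge : MemLp ((s c).indicator (f i)) p μ :=
    ⟨((hfm i).indicator (hs c)).aestronglyMeasurable,
      (hsmall i (s c) (hs c) hc).trans_lt ENNReal.ofReal_lt_top⟩
  have hbounded : MemLp ((s c)ᶜ.indicator (f i)) p μ :=
    MemLp.of_bound ((hfm i).indicator (hs c).compl).aestronglyMeasurable c <|
      Eventually.of_forall fun ω => by
        by_cases hω : ω ∈ s c
        · simp [hω]
        · simpa [hω, s] using (not_le.1 hω).le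
  simpa [indicator_self_add_compl] using hlarge.add hbounded

theorem ae_monotone_tendsto_condExp {Ω : Type*} {m m0 : MeasurableSpace Ω} {μ : Measure Ω}
    (hm : m ≤ m0) [SigmaFinite (μ.trim hm)] {f : ℕ → Ω → ℝ} {g : Ω → ℝ}
    (hf : ∀ n, Integrable (f n) μ) (hg : Integrable g μ)
    (hmono : ∀ᵐ ω ∂μ, Monotone fun n => f n ω)
    (hlim : ∀ᵐ ω ∂μ, Tendsto (fun n => f n ω) atTop (𝓝 (g ω))) :
    ∀ᵐ ω ∂μ, Monotone (fun n => μ[f n | m] ω) ∧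
      Tendsto (fun n => μ[f n | m] ω) atTop (𝓝 (μ[g | m] ω)) := by
  have hf_le_g : ∀ n, f n ≤ᵐ[μ] g := fun n => by
    filter_upwards [hmono, hlim] with ω h1 h2 using h1.ge_of_tendsto h2 n
  have hcmono : ∀ᵐ ω ∂μ, Monotone fun n => μ[f n | m] ω := by
    have := ae_all_iff.2 fun n => condExp_mono (m := m) (hf n) (hf (n + 1)) <| by
      filter_upwards [hmono] with ω h using h n.le_succ
    filter_upwards [this] with ω h using monotone_nat_of_le_succ h
  have hcle : ∀ᵐ ω ∂μ, ∀ n, μ[f n | m] ω ≤ μ[g | m] ω :=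
    ae_all_iff.2 fun n => condExp_mono (hf n) hg (hf_le_g n)
  set G : Ω → ℝ := fun ω => ⨆ n, μ[f n | m] ω
  have hG_lim : ∀ᵐ ω ∂μ, Tendsto (fun n => μ[f n | m] ω) atTop (𝓝 (G ω)) := by
    filter_upwards [hcmono, hcle] with ω h1 h2
    exact tendsto_atTop_ciSup h1 ⟨_, forall_mem_range.2 h2⟩
  have hG_le : G ≤ᵐ[μ] μ[g | m] := by
    filter_upwards [hcle] with ω h using ciSup_le h
  have hG_int : Integrable G μ :=
    integrable_of_le_of_le (Measurable.iSup fun n =>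
        (stronglyMeasurable_condExp.mono hm).measurable).aestronglyMeasurable
      (by filter_upwards [hG_lim, hcmono] with ω h1 h2 using h2.ge_of_tendsto h1 0)
      hG_le integrable_condExp integrable_condExp
  -- `G ≤ μ[g | m]`, and unconditional monotone convergence shows their integrals agree.
  have hG_integral : ∫ ω, G ω ∂μ = ∫ ω, μ[g | m] ω ∂μ := by
    refine tendsto_nhds_unique (integral_tendsto_of_tendsto_of_monotone
      (fun n => integrable_condExp) hG_int hcmono hG_lim) ?_
    simp_rw [integral_condExp hm]
    exact integral_tendsto_of_tendsto_of_monotone hf hg hmono hlim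
  have hG_eq : G =ᵐ[μ] μ[g | m] :=
    (integral_eq_iff_of_ae_le hG_int integrable_condExp hG_le).1 hG_integral
  filter_upwards [hcmono, hG_lim, hG_eq] with ω h1 h2 h3
  exact ⟨h1, h3 ▸ h2⟩

/-- The essential supremum of a family of random variables (not `essSup`, which is taken over
the points of the sample space). -/
def IsEssSup {Ω ι : Type*} {m0 : MeasurableSpace Ω} (μ : Measure Ω) (F : ι → Ω → ℝ)
    (Z : Ω → ℝ) : Prop :=
  (∀ i, F i ≤ᵐ[μ] Z) ∧ ∀ W : Ω → ℝ, (∀ i, F i ≤ᵐ[μ] W) → Z ≤ᵐ[μ] W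

namespace IsEssSup

variable {Ω ι : Type*} {m0 : MeasurableSpace Ω} {μ : Measure Ω}

theorem mono {F G : ι → Ω → ℝ} {Y Z : Ω → ℝ} (hY : IsEssSup μ F Y) (hZ : IsEssSup μ G Z)
    (hFG : ∀ i, F i ≤ᵐ[μ] G i) : Y ≤ᵐ[μ] Z :=
  hY.2 Z fun i => (hFG i).trans (hZ.1 i)

theorem ae_monotone_tendsto {F : ℕ → ι → Ω → ℝ} {G : ι → Ω → ℝ} {Y : ℕ → Ω → ℝ}
    {Z : Ω → ℝ} (hY : ∀ n, IsEssSup μ (F n) (Y n)) (hZ : IsEssSup μ G Z)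
    (hF : ∀ i, ∀ᵐ ω ∂μ, Monotone (fun n => F n i ω) ∧
      Tendsto (fun n => F n i ω) atTop (𝓝 (G i ω))) :
    ∀ᵐ ω ∂μ, Monotone (fun n => Y n ω) ∧ Tendsto (fun n => Y n ω) atTop (𝓝 (Z ω)) := by
  have hstep : ∀ᵐ ω ∂μ, ∀ n, Y n ω ≤ Y (n + 1) ω := ae_all_iff.2 fun n =>
    (hY n).mono (hY (n + 1)) fun i => by
      filter_upwards [hF i] with ω h using h.1 n.le_succ
  have hle : ∀ᵐ ω ∂μ, ∀ n, Y n ω ≤ Z ω := ae_all_iff.2 fun n =>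
    (hY n).mono hZ fun i => by
      filter_upwards [hF i] with ω h using h.1.ge_of_tendsto h.2 n
  set W : Ω → ℝ := fun ω => ⨆ n, Y n ω
  have hY_le_W : ∀ᵐ ω ∂μ, ∀ n, Y n ω ≤ W ω := by
    filter_upwards [hle] with ω h n using le_ciSup ⟨_, forall_mem_range.2 h⟩ n
  have hW : Z ≤ᵐ[μ] W := hZ.2 W fun i => by
    filter_upwards [hF i, ae_all_iff.2 fun n => (hY n).1 i, hY_le_W] with ω hi hFY hYW
    exact le_of_tendsto' hi.2 fun n => (hFY n).trans (hYW n)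
  filter_upwards [hstep, hle, hW] with ω hstep hle hW
  have hmono := monotone_nat_of_le_succ hstep
  have hsup : W ω = Z ω := le_antisymm (ciSup_le hle) hW
  exact ⟨hmono, hsup ▸ tendsto_atTop_ciSup hmono ⟨_, forall_mem_range.2 hle⟩⟩

end IsEssSup

theorem integrable_comp_stoppingTime_of_unifIntegrable {Ω : Type*} {m0 : MeasurableSpace Ω}
    {μ : Measure Ω} [IsFiniteMeasure μ] {T : ℝ} {ℱ : Filtration ℝ m0} {X : ℝ → Ω → ℝ}
    (hX : Adapted ℱ X) (hc : ∀ ω t, ContinuousWithinAt (fun s => X s ω) (Ici t) t)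
    (hD : UnifIntegrable
      (fun τ : {τ : Ω → ℝ // IsStoppingTime ℱ (fun ω => (τ ω : WithTop ℝ)) ∧ ∀ ω, τ ω ∈ Icc 0 T} =>
        fun ω => X (τ.1 ω) ω) 1 μ)
    (τ : {τ : Ω → ℝ // IsStoppingTime ℱ (fun ω => (τ ω : WithTop ℝ)) ∧ ∀ ω, τ ω ∈ Icc 0 T}) :
    Integrable (fun ω => X (τ.1 ω) ω) μ := by
  refine memLp_one_iff_integrable.1 (hD.memLp_of_isFiniteMeasure (fun σ => ?_) τ)
  have hσ : Measurable σ.1 :=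
    WithTop.measurable_untopA.comp (σ.2.1.measurable.mono σ.2.1.measurableSpace_le le_rfl)
  exact (measurable_comp_of_continuousWithinAt_Ici (fun t => (hX t).mono (ℱ.le t) le_rfl)
    hc hσ).stronglyMeasurable

/-- Monotone convergence of Snell envelopes: if càdlàg class-[D] processes `Xn` increase
pointwise to `X`, then their Snell envelopes (characterized as the least a.s. upper bounds of
the conditional expectations at later stopping times) increase a.s. to the Snell envelope
of `X`, at every stopping time. -/
theorem stmt_7 {Ω : Type*} {m0 : MeasurableSpace Ω} {μ : Measure Ω} [IsProbabilityMeasure μ]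
    (T : ℝ) (ℱ : Filtration ℝ m0)
    (Xn : ℕ → ℝ → Ω → ℝ) (X : ℝ → Ω → ℝ)
    (Zn : ℕ → (Ω → ℝ) → Ω → ℝ) (Z : (Ω → ℝ) → Ω → ℝ)
    (hXnadapted : ∀ n, Adapted ℱ (Xn n)) (hXadapted : Adapted ℱ X)
    (hXncadlag : ∀ n ω t, ContinuousWithinAt (fun s => Xn n s ω) (Set.Ici t) t)
    (hXcadlag : ∀ ω t, ContinuousWithinAt (fun s => X s ω) (Set.Ici t) t)
    (hXnD : ∀ n, UnifIntegrable
      (fun τ : {τ : Ω → ℝ // IsStoppingTime ℱ (fun ω => (τ ω : WithTop ℝ)) ∧ ∀ ω, τ ω ∈ Set.Icc 0 T} =>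
        fun ω => Xn n (τ.1 ω) ω) 1 μ)
    (hXD : UnifIntegrable
      (fun τ : {τ : Ω → ℝ // IsStoppingTime ℱ (fun ω => (τ ω : WithTop ℝ)) ∧ ∀ ω, τ ω ∈ Set.Icc 0 T} =>
        fun ω => X (τ.1 ω) ω) 1 μ)
    (hmono : ∀ t ω, Monotone fun n => Xn n t ω)
    (hlim : ∀ t ω, Tendsto (fun n => Xn n t ω) atTop (𝓝 (X t ω)))
    (hZn : ∀ n (θ : Ω → ℝ) (hθ : IsStoppingTime ℱ (fun ω => (θ ω : WithTop ℝ))), (∀ ω, θ ω ∈ Set.Icc 0 T) →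
      (∀ τ : Ω → ℝ, IsStoppingTime ℱ (fun ω => (τ ω : WithTop ℝ)) → (∀ ω, θ ω ≤ τ ω ∧ τ ω ≤ T) →
        μ[(fun ω => Xn n (τ ω) ω) | hθ.measurableSpace] ≤ᵐ[μ] Zn n θ) ∧
      (∀ W : Ω → ℝ,
        (∀ τ : Ω → ℝ, IsStoppingTime ℱ (fun ω => (τ ω : WithTop ℝ)) → (∀ ω, θ ω ≤ τ ω ∧ τ ω ≤ T) →
          μ[(fun ω => Xn n (τ ω) ω) | hθ.measurableSpace] ≤ᵐ[μ] W) →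
        Zn n θ ≤ᵐ[μ] W))
    (hZ : ∀ (θ : Ω → ℝ) (hθ : IsStoppingTime ℱ (fun ω => (θ ω : WithTop ℝ))), (∀ ω, θ ω ∈ Set.Icc 0 T) →
      (∀ τ : Ω → ℝ, IsStoppingTime ℱ (fun ω => (τ ω : WithTop ℝ)) → (∀ ω, θ ω ≤ τ ω ∧ τ ω ≤ T) →
        μ[(fun ω => X (τ ω) ω) | hθ.measurableSpace] ≤ᵐ[μ] Z θ) ∧
      (∀ W : Ω → ℝ,
        (∀ τ : Ω → ℝ, IsStoppingTime ℱ (fun ω => (τ ω : WithTop ℝ)) → (∀ ω, θ ω ≤ τ ω ∧ τ ω ≤ T) →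
          μ[(fun ω => X (τ ω) ω) | hθ.measurableSpace] ≤ᵐ[μ] W) →
        Z θ ≤ᵐ[μ] W)) :
    ∀ (θ : Ω → ℝ), IsStoppingTime ℱ (fun ω => (θ ω : WithTop ℝ)) → (∀ ω, θ ω ∈ Set.Icc 0 T) →
      ∀ᵐ ω ∂μ, (Monotone fun n => Zn n θ ω) ∧
        Tendsto (fun n => Zn n θ ω) atTop (𝓝 (Z θ ω)) := by
  intro θ hθ hθT
  let Θ := {τ : Ω → ℝ // IsStoppingTime ℱ (fun ω => (τ ω : WithTop ℝ)) ∧ ∀ ω, θ ω ≤ τ ω ∧ τ ω ≤ T}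
  let toIcc (τ : Θ) : {τ : Ω → ℝ // IsStoppingTime ℱ (fun ω => (τ ω : WithTop ℝ)) ∧
      ∀ ω, τ ω ∈ Set.Icc 0 T} :=
    ⟨τ.1, τ.2.1, fun ω => ⟨(hθT ω).1.trans (τ.2.2 ω).1, (τ.2.2 ω).2⟩⟩
  refine IsEssSup.ae_monotone_tendsto
    (F := fun n (τ : Θ) => μ[fun ω => Xn n (τ.1 ω) ω | hθ.measurableSpace])
    (G := fun τ : Θ => μ[fun ω => X (τ.1 ω) ω | hθ.measurableSpace]) (fun n => ?_) ?_ fun τ => ?_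
  · obtain ⟨hub, hleast⟩ := hZn n θ hθ hθT
    exact ⟨fun τ => hub τ.1 τ.2.1 τ.2.2, fun W hW => hleast W fun τ hτ hθτ => hW ⟨τ, hτ, hθτ⟩⟩
  · obtain ⟨hub, hleast⟩ := hZ θ hθ hθT
    exact ⟨fun τ => hub τ.1 τ.2.1 τ.2.2, fun W hW => hleast W fun τ hτ hθτ => hW ⟨τ, hτ, hθτ⟩⟩
  · exact ae_monotone_tendsto_condExp hθ.measurableSpace_le
      (fun n => integrable_comp_stoppingTime_of_unifIntegrable (hXnadapted n) (hXncadlag n)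
        (hXnD n) (toIcc τ))
      (integrable_comp_stoppingTime_of_unifIntegrable hXadapted hXcadlag hXD (toIcc τ))
      (ae_of_all μ fun ω => hmono _ ω) (ae_of_all μ fun ω => hlim _ ω)
end
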